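/- arXiv:2301.01676 — 4 statements merged into one kernel-verified Lean document; each statement's English description precedes it below -/
import Mathlib

section
/- A binary de Bruijn sequence of order k exists: there is a cyclic sequence σ of length 2^k over alphabet {0,1} such that every binary string of length k occurs exactly once as a (cyclic) substring of σ. -/
/-!
Lempel's lifting, by induction on `k ≥ 2`. Let `s` be a binary sequence of period `N = 2^k`
whose windows of length `k` exhaust all words and whose period sum is even. Its partial sums `τ`
then also have period `N`, and a word `w` of length `k + 1` is a window of `τ` or of `τ + 1` as
soon as its difference word `(w (j+1) - w j)_j` is a window of `s`, which it always is. Cut open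
at the run `1…1` of `s`, where `τ` alternates, `τ` and `τ + 1` share `k` letters and splice into
one sequence of period `2N` containing every word of length `k + 1`; its period sum is `N`, again
even. On a cycle of length `2^k`, containing all `2^k` words forces containing each
exactly once.
-/

open Function Finset

namespace Function.Periodic

variable {M : Type*} [AddCommMonoid M] {f : ℕ → M} {N : ℕ}

theorem sum_range_const_add (hf : Periodic f N) (a : ℕ) :
    ∑ i ∈ range N, f (a + i) = ∑ i ∈ range N, f i := by
  induction a with
  | zero => simp
  | succ a ih =>
    rw [← ih]
    obtain _ | M := N
    · simp
    · rw [sum_range_succ_comm, sum_range_succ', show a + 1 + M = a + (M + 1) by ring, hf]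
      simp only [add_right_comm a 1, add_zero, add_assoc, add_comm (f a)]

theorem periodic_sum_range {G : Type*} [AddCommGroup G] {s : ℕ → G} (hs : Periodic s N)
    (hsum : ∑ i ∈ range N, s i = 0) : Periodic (fun n => ∑ i ∈ range n, s i) N := fun n => by
  simp only [sum_range_add, hs.sum_range_const_add, hsum, add_zero]

end Function.Periodic

namespace DeBruijn

variable {α : Type*} {f u v : ℕ → α} {N k : ℕ}

def window (f : ℕ → α) (k a : ℕ) : Fin k → α := fun j => f (a + j)

theorem periodic_window (hf : Periodic f N) (k : ℕ) : Periodic (window f k) N :=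
  fun a => funext fun j => by simp only [window, add_right_comm a N, hf _]

theorem range_window_const_add (hf : Periodic f N) (hN : 0 < N) (p : ℕ) :
    Set.range (window (fun i => f (p + i)) k) = Set.range (window f k) := by
  have hshift : ∀ a, window (fun i => f (p + i)) k a = window f k (p + a) :=
    fun a => funext fun j => by simp only [window, add_assoc]
  refine Set.Subset.antisymm ?_ ?_
  · rintro _ ⟨a, rfl⟩
    exact ⟨p + a, (hshift a).symm⟩
  · rintro _ ⟨a, rfl⟩
    refine ⟨a + p * N - p, ?_⟩
    have hp : p ≤ p * N := Nat.le_mul_of_pos_right p hN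
    rw [hshift, show p + (a + p * N - p) = a + p * N by omega]
    exact (periodic_window hf k).nat_mul p a

theorem window_succ_eq {G : Type*} [AddCommGroup G] {τ s : ℕ → G}
    (hτ : ∀ i, τ (i + 1) = τ i + s i) {a : ℕ} {w : Fin (k + 1) → G} (h0 : τ a = w 0)
    (hs : window s k a = fun j => w j.succ - w j.castSucc) : window τ (k + 1) a = w := by
  funext j
  induction j using Fin.induction with
  | zero => exact h0
  | succ j ih =>
    have hj := congrFun hs j
    simp only [window, Fin.val_succ, Fin.val_castSucc] at hj ih ⊢
    rw [← add_assoc, hτ, ih, hj, add_sub_cancel]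

theorem exists_window_add_const {G : Type*} [AddCommGroup G] {τ s : ℕ → G}
    (hτ : ∀ i, τ (i + 1) = τ i + s i) (hs : Surjective (window s k)) (w : Fin (k + 1) → G) :
    ∃ c a, window (fun i => τ i + c) (k + 1) a = w := by
  obtain ⟨a, ha⟩ := hs fun j => w j.succ - w j.castSucc
  refine ⟨w 0 - τ a, a, window_succ_eq (fun i => ?_) (add_sub_cancel _ _) ha⟩
  rw [hτ, add_right_comm]

def splice (N : ℕ) (u v : ℕ → α) (x : ℕ) : α := if x % (2 * N) < N then u x else v x

theorem splice_of_lt {x : ℕ} (hx : x < N) : splice N u v x = u x :=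
  if_pos (by rwa [Nat.mod_eq_of_lt (by omega)])

theorem splice_of_le_of_lt {x : ℕ} (h₁ : N ≤ x) (h₂ : x < 2 * N) : splice N u v x = v x :=
  if_neg (by rw [Nat.mod_eq_of_lt h₂]; omega)

theorem splice_eq_left_of_eq {x : ℕ} (h : u x = v x) : splice N u v x = u x := by
  unfold splice; split_ifs <;> simp [h]

theorem periodic_splice (hu : Periodic u N) (hv : Periodic v N) :
    Periodic (splice N u v) (2 * N) := fun x => by
  simp only [splice, Nat.add_mod_right]
  rw [two_mul, ← add_assoc, hu, hu, hv, hv]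

theorem sum_range_splice {M : Type*} [AddCommMonoid M] {u v : ℕ → M} (hv : Periodic v N) :
    ∑ i ∈ range (2 * N), splice N u v i = ∑ i ∈ range N, u i + ∑ i ∈ range N, v i := by
  rw [two_mul, sum_range_add]
  congr 1
  · exact sum_congr rfl fun i hi => splice_of_lt (mem_range.mp hi)
  · refine sum_congr rfl fun i hi => ?_
    rw [splice_of_le_of_lt (by omega) (by simp at hi; omega), add_comm, hv]

/-- A window of length `k + 1` starting in a `u`-block overruns it by at most `k` letters, and
there `u` and `v` agree. -/
theorem range_window_subset_splice_left (hu : Periodic u N) (hv : Periodic v N) (hN : 0 < N)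
    (huv : ∀ m < k, u m = v m) :
    Set.range (window u (k + 1)) ⊆ Set.range (window (splice N u v) (k + 1)) := by
  rintro _ ⟨a, rfl⟩
  refine ⟨a % N, ?_⟩
  rw [← (periodic_window hu _).map_mod_nat a]
  funext j
  have ha := Nat.mod_lt a hN
  by_cases hx : a % N + j < N
  · exact splice_of_lt hx
  · obtain ⟨m, hm⟩ : ∃ m, a % N + j = m + N := ⟨a % N + j - N, by omega⟩
    simp only [window, hm]
    exact splice_eq_left_of_eq (by rw [hu, hv, huv m (by omega)])

theorem range_window_subset_splice_right (hu : Periodic u N) (hv : Periodic v N) (hN : 0 < N)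
    (huv : ∀ m < k, u m = v m) :
    Set.range (window v (k + 1)) ⊆ Set.range (window (splice N u v) (k + 1)) := by
  rintro _ ⟨a, rfl⟩
  refine ⟨a % N + N, ?_⟩
  rw [← (periodic_window hv _).map_mod_nat a, ← periodic_window hv _ (a % N)]
  funext j
  have ha := Nat.mod_lt a hN
  by_cases hx : a % N + N + j < 2 * N
  · exact splice_of_le_of_lt (by omega) hx
  · obtain ⟨m, hm⟩ : ∃ m, a % N + N + j = m + 2 * N := ⟨a % N + N + j - 2 * N, by omega⟩
    have huv' : u (m + 2 * N) = v (m + 2 * N) := by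
      rw [two_mul, ← add_assoc, hu, hu, hv, hv, huv m (by omega)]
    simp only [window, hm]
    exact (splice_eq_left_of_eq huv').trans huv'

theorem exists_lift {s : ℕ → ZMod 2} (hN : 0 < N) (hs : Periodic s N)
    (hsum : ∑ i ∈ range N, s i = 0) (hsurj : Surjective (window s k)) :
    ∃ r : ℕ → ZMod 2, Periodic r (2 * N) ∧ ∑ i ∈ range (2 * N), r i = N ∧
      Surjective (window r (k + 1)) := by
  obtain ⟨p, hp⟩ := hsurj 1
  set τ : ℕ → ZMod 2 := fun n => ∑ i ∈ range n, s i
  have hτ : ∀ i, τ (i + 1) = τ i + s i := fun i => sum_range_succ s i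
  have hτN : Periodic τ N := hs.periodic_sum_range hsum
  set u : ℕ → ZMod 2 := fun i => τ (p + i)
  set v : ℕ → ZMod 2 := fun i => τ (p + 1 + i) + 1
  have hu : Periodic u N := hτN.const_add p
  have hv : Periodic v N := (hτN.const_add (p + 1)).comp (· + 1)
  have huv : ∀ m < k, u m = v m := fun m hm => by
    have hpm : s (p + m) = 1 := congrFun hp ⟨m, hm⟩
    change τ (p + m) = τ (p + 1 + m) + 1
    rw [add_right_comm, hτ, hpm, add_assoc, CharTwo.add_self_eq_zero, add_zero]
  refine ⟨splice N u v, periodic_splice hu hv, ?_, fun w => ?_⟩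
  · rw [sum_range_splice hv, sum_add_distrib, hτN.sum_range_const_add,
      hτN.sum_range_const_add, sum_const, card_range, nsmul_one, ← add_assoc,
      CharTwo.add_self_eq_zero, zero_add]
  · obtain ⟨c, a, hca⟩ := exists_window_add_const hτ hsurj w
    obtain rfl | rfl := (by decide : ∀ c : ZMod 2, c = 0 ∨ c = 1) c
    · simp only [add_zero] at hca
      rw [← hca]
      exact range_window_subset_splice_left hu hv hN huv
        ((range_window_const_add hτN hN p).ge ⟨a, rfl⟩)
    · rw [← hca]
      exact range_window_subset_splice_right hu hv hN huv
        ((range_window_const_add (hτN.comp (· + 1)) hN (p + 1)).ge ⟨a, rfl⟩)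

theorem exists_binary_sum_eq_zero_of_two_le (hk : 2 ≤ k) :
    ∃ s : ℕ → ZMod 2, Periodic s (2 ^ k) ∧ ∑ i ∈ range (2 ^ k), s i = 0 ∧
      Surjective (window s k) := by
  induction k, hk using Nat.le_induction with
  | base =>
    refine ⟨fun i => if i % 4 < 2 then 0 else 1, fun i => by simp, by decide, fun w => ?_⟩
    obtain ⟨a, ha⟩ : ∃ a : Fin 4, window (fun i => if i % 4 < 2 then 0 else 1) 2 a = w := by
      revert w; decide
    exact ⟨a, ha⟩
  | succ k hk ih =>
    obtain ⟨s, hs, hsum, hsurj⟩ := ih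
    obtain ⟨r, hr, hrsum, hrsurj⟩ := exists_lift (by positivity) hs hsum hsurj
    refine ⟨r, by rwa [pow_succ'], ?_, hrsurj⟩
    rw [pow_succ', hrsum, ZMod.natCast_eq_zero_iff]
    exact dvd_pow_self 2 (by omega)

theorem exists_binary_surjective_window (k : ℕ) :
    ∃ s : ℕ → ZMod 2, Periodic s (2 ^ k) ∧ Surjective (window s k) := by
  obtain _ | _ | k := k
  · exact ⟨0, fun _ => rfl, fun w => ⟨0, Subsingleton.elim _ _⟩⟩
  · refine ⟨fun i => i, fun i => by simp; decide, fun w => ⟨(w 0).val, funext fun j => ?_⟩⟩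
    fin_cases j
    simp [window]
  · obtain ⟨s, hs, -, hsurj⟩ := exists_binary_sum_eq_zero_of_two_le (le_add_self : 2 ≤ k + 2)
    exact ⟨s, hs, hsurj⟩

theorem existsUnique_zmod_window [Fintype α] [NeZero N] (hf : Periodic f N)
    (hcard : Fintype.card α ^ k = N) (hsurj : Surjective (window f k)) (w : Fin k → α) :
    ∃! i : ZMod N, ∀ j : Fin k, f (i + (j : ℕ) : ZMod N).val = w j := by
  have hval : ∀ i : ZMod N, window f k i.val = fun j : Fin k => f (i + (j : ℕ) : ZMod N).val :=
    fun i => funext fun j => by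
      rw [window, ZMod.val_add, ZMod.val_natCast, Nat.add_mod_mod, hf.map_mod_nat]
  have hsurj' : Surjective fun i : ZMod N => window f k i.val := fun w' => by
    obtain ⟨a, rfl⟩ := hsurj w'
    exact ⟨a, by dsimp only; rw [ZMod.val_natCast, (periodic_window hf k).map_mod_nat]⟩
  have hbij := (Fintype.bijective_iff_surjective_and_card _).mpr ⟨hsurj', by simp [hcard]⟩
  simpa only [hval, funext_iff] using hbij.existsUnique w

end DeBruijn

/-- A binary de Bruijn sequence of order `k` exists: a cyclic sequence of
length `2^k` over `{0,1}` in which every binary string of length `k` occurs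
exactly once as a cyclic substring. -/
theorem binary_deBruijn_exists (k : ℕ) :
    ∃ σ : ZMod (2 ^ k) → Fin 2,
      ∀ w : Fin k → Fin 2,
        ∃! i : ZMod (2 ^ k), ∀ j : Fin k, σ (i + (j : ℕ)) = w j := by
  obtain ⟨s, hs, hsurj⟩ := DeBruijn.exists_binary_surjective_window k
  exact ⟨fun i => s i.val, DeBruijn.existsUnique_zmod_window hs (by simp) hsurj⟩
end

section
/- For any finite alphabet A with |A| = n ≥ 2 and any k ≥ 1, there exists a de Bruijn sequence of order k over A, i.e., a cyclic sequence of length n^k in which every string in A^k occurs exactly once as a cyclic substring. -/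
/-!
Words of length `k = m + 1` are the edges of the de Bruijn graph on words of length `m`, the word
`e` going from `Fin.init e` to `Fin.tail e`, and a de Bruijn sequence is an Eulerian circuit of
this graph. Every vertex has in- and out-degree `|A|`, so bijections between the in- and out-edges
at each vertex assemble into a permutation `π` of the edges in which `π e` starts where `e` ends.
If `e` and `f` end at the same vertex but lie on different cycles of `π`, exchanging their
successors merges the two cycles; since the graph is strongly connected, a permutation of this
kind whose cycle through a fixed edge is as large as possible is a single cycle. Reading off the
first letters of the edges along it gives the sequence.
-/

open Equiv Function

namespace Equiv.Perm

variable {α : Type*}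

theorem sameCycle_mul_swap_of_not_sameCycle [Finite α] [DecidableEq α] {π : Perm α}
    {e f x : α} (hef : ¬π.SameCycle e f) (hx : π.SameCycle e x) :
    (π * swap e f).SameCycle f x := by
  have hf : (π * swap e f) f = π e := by simp
  obtain ⟨n, rfl⟩ := (sameCycle_apply_left.mpr hx).exists_nat_pow_eq
  clear hx
  induction n with
  | zero => rw [pow_zero, one_apply, ← hf]; exact sameCycle_apply_right.mpr .rfl
  | succ n ih =>
    set y := (π ^ n) (π e)
    have hy : π.SameCycle e y := sameCycle_apply_left.mp ⟨n, by simp [y]⟩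
    rw [pow_succ', mul_apply]
    change (π * swap e f).SameCycle f (π y)
    by_cases hye : y = e
    · rw [hye, ← hf]; exact sameCycle_apply_right.mpr .rfl
    · have hyf : y ≠ f := fun h => hef (h ▸ hy)
      have : (π * swap e f) y = π y := by simp [swap_apply_of_ne_of_ne hye hyf]
      rw [← this]; exact sameCycle_apply_right.mpr ih

theorem orderOf_eq_card_of_forall_sameCycle [Fintype α] [DecidableEq α] [Nonempty α]
    {π : Perm α} (h : ∀ x y, π.SameCycle x y) : orderOf π = Fintype.card α := by
  by_cases hπ : π = 1
  · subst hπ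
    obtain ⟨x⟩ := ‹Nonempty α›
    rw [orderOf_one, eq_comm, Fintype.card_eq_one_iff]
    exact ⟨x, fun y => sameCycle_one.mp (h y x)⟩
  · obtain ⟨x, hx⟩ : ∃ x, π x ≠ x := by simpa [Perm.ext_iff] using hπ
    have hcyc : π.IsCycle := ⟨x, hx, fun y _ => h x y⟩
    have hsupp : π.support = Finset.univ := Finset.eq_univ_of_forall fun y =>
      mem_support.mpr (((isCycle_iff_sameCycle hx).mp hcyc).mp (h x y))
    rw [hcyc.orderOf, hsupp, Finset.card_univ]

theorem exists_zmod_equiv_of_forall_sameCycle [Fintype α] [DecidableEq α] [Nonempty α]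
    {π : Perm α} (h : ∀ x y, π.SameCycle x y) {N : ℕ} (hN : Fintype.card α = N) :
    ∃ F : ZMod N ≃ α, ∀ i, F (i + 1) = π (F i) := by
  subst hN
  obtain ⟨x₀⟩ := ‹Nonempty α›
  have hord := orderOf_eq_card_of_forall_sameCycle h
  have : NeZero (Fintype.card α) := ⟨Fintype.card_ne_zero⟩
  let F : ZMod (Fintype.card α) → α := fun i => (π ^ i.val) x₀
  have hsurj : Surjective F := fun y => by
    obtain ⟨n, rfl⟩ := (h x₀ y).exists_nat_pow_eq
    refine ⟨n, ?_⟩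
    simp only [F, ZMod.val_natCast, ← hord, pow_mod_orderOf]
  have hbij : Bijective F :=
    (Fintype.bijective_iff_surjective_and_card F).mpr ⟨hsurj, ZMod.card _⟩
  refine ⟨Equiv.ofBijective F hbij, fun i => ?_⟩
  change (π ^ (i + 1).val) x₀ = π ((π ^ i.val) x₀)
  have hpow : π ^ (i + 1).val = π ^ (i.val + 1) := pow_eq_pow_iff_modEq.mpr <| by
    rw [hord, ← ZMod.natCast_eq_natCast_iff]; simp
  rw [hpow, pow_succ', mul_apply]

end Equiv.Perm

section Eulerian

variable {E V : Type*} {s t : E → V}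

theorem exists_perm_source_apply_eq_target [Finite E]
    (hdeg : ∀ v, Nat.card {e // s e = v} = Nat.card {e // t e = v}) :
    ∃ π : Perm E, ∀ e, s (π e) = t e := by
  have φ : ∀ v, {e // t e = v} ≃ {e // s e = v} := fun v =>
    Classical.choice (Finite.card_eq.mp (hdeg v).symm)
  exact ⟨(sigmaFiberEquiv t).symm.trans ((sigmaCongrRight φ).trans (sigmaFiberEquiv s)),
    fun e => (φ (t e) ⟨e, rfl⟩).2⟩

theorem Equiv.Perm.sameCycle_of_forall_target_eq
    (hconn : ∀ e f, Relation.ReflTransGen (fun e f => t e = s f) e f)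
    {π : Perm E} (hπ : ∀ e, s (π e) = t e) {e₀ : E}
    (hclosed : ∀ e f, t e = t f → π.SameCycle e₀ e → π.SameCycle e₀ f) (f : E) :
    π.SameCycle e₀ f := by
  induction hconn e₀ f with
  | refl => exact .rfl
  | @tail b c _ hbc ih =>
    have h : t (π.symm c) = t b := by rw [← hπ, apply_symm_apply, hbc]
    simpa using sameCycle_apply_right.mpr (hclosed b _ h.symm ih)

theorem exists_perm_source_apply_eq_target_forall_sameCycle [Finite E]
    (hdeg : ∀ v, Nat.card {e // s e = v} = Nat.card {e // t e = v})
    (hconn : ∀ e f, Relation.ReflTransGen (fun e f => t e = s f) e f) :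
    ∃ π : Perm E, (∀ e, s (π e) = t e) ∧ ∀ e f, π.SameCycle e f := by
  classical
  have := Fintype.ofFinite E
  obtain ⟨π₀, hπ₀⟩ := exists_perm_source_apply_eq_target hdeg
  rcases isEmpty_or_nonempty E with hE | ⟨⟨e₀⟩⟩
  · exact ⟨π₀, hπ₀, isEmptyElim⟩
  let orbit (π : Perm E) : Finset E := {x | π.SameCycle e₀ x}
  obtain ⟨π, hπ, hmax⟩ := Finset.exists_max_image {π : Perm E | ∀ e, s (π e) = t e}
    (fun π => (orbit π).card) ⟨π₀, by simpa using hπ₀⟩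
  simp only [Finset.mem_filter, Finset.mem_univ, true_and] at hπ hmax
  refine ⟨π, hπ, fun e f => ?_⟩
  suffices h : ∀ f, π.SameCycle e₀ f from (h e).symm.trans (h f)
  refine Perm.sameCycle_of_forall_target_eq hconn hπ fun e f htef he => ?_
  by_contra hf
  let σ := π * swap e f
  have hσ : ∀ x, s (σ x) = t x := fun x => by
    rcases eq_or_ne x e with rfl | hxe
    · simp [σ, hπ, htef]
    rcases eq_or_ne x f with rfl | hxf
    · simp [σ, hπ, htef]
    · simp [σ, swap_apply_of_ne_of_ne hxe hxf, hπ]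
  have hfσ : ∀ x, π.SameCycle e₀ x → σ.SameCycle f x := fun x hx =>
    Perm.sameCycle_mul_swap_of_not_sameCycle (fun h => hf (he.trans h)) (he.symm.trans hx)
  have hlt : orbit π ⊂ orbit σ := by
    refine Finset.ssubset_iff_of_subset (fun x hx => ?_) |>.mpr ⟨f, ?_, ?_⟩
    · simp only [orbit, Finset.mem_filter, Finset.mem_univ, true_and] at hx ⊢
      exact (hfσ e₀ .rfl).symm.trans (hfσ x hx)
    · simpa [orbit] using (hfσ e₀ .rfl).symm
    · simpa [orbit] using hf
  exact (hmax σ hσ).not_gt (Finset.card_lt_card hlt)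

end Eulerian

namespace DeBruijn

variable {A : Type*} {m : ℕ}

theorem card_init_eq (v : Fin m → A) :
    Nat.card {e : Fin (m + 1) → A // Fin.init e = v} = Nat.card A :=
  Nat.card_congr
    { toFun e := e.1 (Fin.last m)
      invFun a := ⟨Fin.snoc v a, by simp⟩
      left_inv e := Subtype.ext (by simpa [e.2] using Fin.snoc_init_self e.1)
      right_inv a := by simp }

theorem card_tail_eq (v : Fin m → A) :
    Nat.card {e : Fin (m + 1) → A // Fin.tail e = v} = Nat.card A :=
  Nat.card_congr
    { toFun e := e.1 0
      invFun a := ⟨Fin.cons a v, by simp⟩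
      left_inv e := Subtype.ext (by simpa [e.2] using Fin.cons_self_tail e.1)
      right_inv a := by simp }

theorem reflTransGen_window (u : ℕ → A) (n : ℕ) :
    Relation.ReflTransGen (fun e f : Fin (m + 1) → A => Fin.tail e = Fin.init f)
      (fun i => u i) (fun i => u (i + n)) := by
  induction n with
  | zero => exact .refl
  | succ n ih =>
    refine ih.tail (funext fun i => ?_)
    simp only [Fin.tail, Fin.init, Fin.val_succ, Fin.val_castSucc]
    rw [add_right_comm, add_assoc]

theorem reflTransGen_tail_eq_init (e f : Fin (m + 1) → A) :
    Relation.ReflTransGen (fun e f : Fin (m + 1) → A => Fin.tail e = Fin.init f) e f := by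
  -- `u` spells `e` and then `f`; the `% (m + 1)` only keeps the index in range
  let u (n : ℕ) : A :=
    if h : n < m + 1 then e ⟨n, h⟩ else f ⟨(n - (m + 1)) % (m + 1), Nat.mod_lt _ m.succ_pos⟩
  have he : (fun i : Fin (m + 1) => u i) = e := funext fun i => by simp only [u, dif_pos i.isLt]
  have hf : (fun i : Fin (m + 1) => u (i + (m + 1))) = f := funext fun i => by
    simp only [u, dif_neg (show ¬(i : ℕ) + (m + 1) < m + 1 by omega), Nat.add_sub_cancel,
      Nat.mod_eq_of_lt i.isLt]
  exact he ▸ hf ▸ reflTransGen_window u (m + 1)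

theorem apply_add_zero_eq {N : ℕ} {F : ZMod N → Fin (m + 1) → A}
    (hF : ∀ i, Fin.tail (F i) = Fin.init (F (i + 1))) (i : ZMod N) (j : Fin (m + 1)) :
    F (i + (j : ℕ)) 0 = F i j := by
  induction j using Fin.induction generalizing i with
  | zero => simp
  | succ j ih =>
    have := congrFun (hF i) j
    simp only [Fin.tail, Fin.init] at this
    rw [this, ← ih, Fin.val_succ, Fin.val_castSucc, Nat.cast_succ, add_comm (j : ZMod N),
      add_assoc]

end DeBruijn

/-- For any finite alphabet `A` with `|A| = n ≥ 2` and any `k ≥ 1`, there is a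
de Bruijn sequence of order `k` over `A`: a cyclic sequence of length `n^k` in
which every string in `A^k` occurs exactly once as a cyclic substring. -/
theorem deBruijn_exists (A : Type) [Fintype A] (n k : ℕ)
    (hA : Fintype.card A = n) (hn : 2 ≤ n) (hk : 1 ≤ k) :
    ∃ σ : ZMod (n ^ k) → A,
      ∀ w : Fin k → A,
        ∃! i : ZMod (n ^ k), ∀ j : Fin k, σ (i + (j : ℕ)) = w j := by
  classical
  obtain ⟨m, rfl⟩ : ∃ m, k = m + 1 := ⟨k - 1, by omega⟩
  have : Nonempty A := Fintype.card_pos_iff.mp (by omega)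
  obtain ⟨π, hπ, hcyc⟩ := exists_perm_source_apply_eq_target_forall_sameCycle
    (E := Fin (m + 1) → A) (s := Fin.init) (t := Fin.tail)
    (fun v => (DeBruijn.card_init_eq v).trans (DeBruijn.card_tail_eq v).symm)
    DeBruijn.reflTransGen_tail_eq_init
  obtain ⟨F, hF⟩ := Perm.exists_zmod_equiv_of_forall_sameCycle hcyc (N := n ^ (m + 1))
    (by simp [hA])
  have hFsucc : ∀ i, Fin.tail (F i) = Fin.init (F (i + 1)) := fun i => by rw [hF, hπ]
  refine ⟨fun i => F i 0, fun w => ?_⟩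
  simp only [DeBruijn.apply_add_zero_eq hFsucc, ← funext_iff]
  exact F.bijective.existsUnique w
end

section
/- Let f = f₁·f₂ be a product of homogeneous non-commutative polynomials of degrees d₁ and d₂, and let J ⊆ [d₁+d₂] be an interval of length ℓ. If J ⊆ [1,d₁], then f^J equals a scalar multiple of f₁^J (namely f₁^J times the sum of coefficients of f₂); if J ⊆ [d₁+1, d₁+d₂], then f^J is a scalar multiple of f₂^{J−d₁}; otherwise J contains both positions d₁ and d₁+1, and there are at most ℓ−1 such intervals. -/
/-- Non-commutative polynomials in `n` variables over `F` (the free algebra,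
presented as the monoid algebra of the free monoid on `Fin n`). -/
abbrev NCPoly (F : Type) [CommSemiring F] (n : ℕ) : Type :=
  MonoidAlgebra F (FreeMonoid (Fin n))

/-- `f` is homogeneous of degree `d`: every monomial of `f` is a word of length `d`. -/
def IsHomog {F : Type} [CommSemiring F] {n : ℕ} (d : ℕ) (f : NCPoly F n) : Prop :=
  ∀ w ∈ f.coeff.support, (FreeMonoid.toList w).length = d

/-- Restriction `f^J` for the interval `J = [a,b]` (1-indexed positions): the
linear extension of `x_{j_1}⋯x_{j_d} ↦ x_{j_a}⋯x_{j_b}`. -/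
noncomputable def NCrestrict {F : Type} [CommSemiring F] {n : ℕ} (a b : ℕ)
    (f : NCPoly F n) : NCPoly F n :=
  MonoidAlgebra.ofCoeff <| Finsupp.mapDomain
    (fun w => FreeMonoid.ofList (((FreeMonoid.toList w).drop (a - 1)).take (b + 1 - a))) f.coeff

/-- Sum of the coefficients of `f` (i.e. `f^∅`). -/
noncomputable def coeffSum {F : Type} [CommSemiring F] {n : ℕ} (f : NCPoly F n) : F :=
  Finsupp.sum f.coeff (fun _ c => c)

/-
Restriction to `J` is the linear extension of a map on words, and the product `f₁ f₂` is spanned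
by concatenations `w₁ w₂` with `|w₁| = d₁`. If `J` lies inside the first `d₁` positions, the
restriction of `w₁ w₂` only sees `w₁`, so summing over `w₂` multiplies `f₁^J` by the coefficient
sum of `f₂`; symmetrically when `J` lies beyond position `d₁`. An interval of length `ℓ` meeting
both `d₁` and `d₁ + 1` starts in `(d₁ + 1 - ℓ, d₁]`, which leaves at most `ℓ - 1` choices.
-/

open Finsupp

section WordMap

variable {F : Type} [CommSemiring F] {n : ℕ} {β : Type}

lemma mapDomain_coeff_mul (g : FreeMonoid (Fin n) → β) (f₁ f₂ : NCPoly F n) :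
    mapDomain g (f₁ * f₂).coeff
      = f₁.coeff.sum fun w₁ c₁ => f₂.coeff.sum fun w₂ c₂ => single (g (w₁ * w₂)) (c₁ * c₂) := by
  rw [MonoidAlgebra.mul_def, MonoidAlgebra.coeff_finsuppSum, mapDomain_sum]
  refine sum_congr fun w₁ _ => ?_
  rw [MonoidAlgebra.coeff_finsuppSum, mapDomain_sum]
  exact sum_congr fun w₂ _ => by rw [MonoidAlgebra.coeff_single, mapDomain_single]

lemma mapDomain_coeff_mul_of_left {g : FreeMonoid (Fin n) → β} {f₁ f₂ : NCPoly F n}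
    (hg : ∀ w₁ ∈ f₁.coeff.support, ∀ w₂, g (w₁ * w₂) = g w₁) :
    mapDomain g (f₁ * f₂).coeff = coeffSum f₂ • mapDomain g f₁.coeff := by
  rw [mapDomain_coeff_mul, mapDomain, smul_sum]
  refine sum_congr fun w₁ hw₁ => ?_
  simp only [hg w₁ hw₁, smul_single, smul_eq_mul, coeffSum, sum, ← single_finsetSum,
    ← Finset.mul_sum, mul_comm]

lemma mapDomain_coeff_mul_of_right {g g' : FreeMonoid (Fin n) → β} {f₁ f₂ : NCPoly F n}
    (hg : ∀ w₁ ∈ f₁.coeff.support, ∀ w₂, g (w₁ * w₂) = g' w₂) :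
    mapDomain g (f₁ * f₂).coeff = coeffSum f₁ • mapDomain g' f₂.coeff := by
  rw [mapDomain_coeff_mul, sum_comm, mapDomain, smul_sum]
  refine sum_congr fun w₂ _ => ?_
  rw [sum_congr (g2 := fun w₁ c₁ => single (g' w₂) (c₁ * f₂.coeff w₂))
    fun w₁ hw₁ => by rw [hg w₁ hw₁]]
  simp only [smul_single, smul_eq_mul, coeffSum, sum, ← single_finsetSum, ← Finset.sum_mul]

end WordMap

def wordRestrict {n : ℕ} (a b : ℕ) (w : FreeMonoid (Fin n)) : FreeMonoid (Fin n) :=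
  FreeMonoid.ofList ((w.toList.drop (a - 1)).take (b + 1 - a))

lemma NCrestrict_eq_mapDomain {F : Type} [CommSemiring F] {n : ℕ} (a b : ℕ) (f : NCPoly F n) :
    NCrestrict a b f = MonoidAlgebra.ofCoeff (mapDomain (wordRestrict a b) f.coeff) :=
  rfl

lemma wordRestrict_mul_of_le {n d a b : ℕ} (ha : 1 ≤ a) (hbd : b ≤ d) {w₁ : FreeMonoid (Fin n)}
    (hw₁ : w₁.toList.length = d) (w₂ : FreeMonoid (Fin n)) :
    wordRestrict a b (w₁ * w₂) = wordRestrict a b w₁ := by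
  rcases Nat.lt_or_ge b a with hba | hab
  · simp [wordRestrict, Nat.sub_eq_zero_of_le hba]
  rw [wordRestrict, wordRestrict, FreeMonoid.toList_mul, List.drop_append_of_le_length (by omega),
    List.take_append_of_le_length (by rw [List.length_drop]; omega)]

lemma wordRestrict_mul_of_lt {n d a b : ℕ} (hda : d < a) {w₁ : FreeMonoid (Fin n)}
    (hw₁ : w₁.toList.length = d) (w₂ : FreeMonoid (Fin n)) :
    wordRestrict a b (w₁ * w₂) = wordRestrict (a - d) (b - d) w₂ := by
  rw [wordRestrict, wordRestrict, FreeMonoid.toList_mul, List.drop_append,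
    List.drop_eq_nil_of_le (by omega), List.nil_append, hw₁,
    show a - 1 - d = a - d - 1 by omega, show b + 1 - a = b - d + 1 - (a - d) by omega]

lemma card_filter_straddling_le (N d ℓ : ℕ) :
    ((Finset.Icc 1 N).filter
        (fun a' => a' + ℓ - 1 ≤ N ∧ a' ≤ d ∧ d + 1 ≤ a' + ℓ - 1)).card ≤ ℓ - 1 := by
  have hsub : (Finset.Icc 1 N).filter (fun a' => a' + ℓ - 1 ≤ N ∧ a' ≤ d ∧ d + 1 ≤ a' + ℓ - 1)
      ⊆ Finset.Ioc (d + 1 - ℓ) d := by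
    intro x hx
    simp only [Finset.mem_filter, Finset.mem_Icc, Finset.mem_Ioc] at hx ⊢
    omega
  calc _ ≤ (Finset.Ioc (d + 1 - ℓ) d).card := Finset.card_le_card hsub
    _ = d - (d + 1 - ℓ) := Nat.card_Ioc _ _
    _ ≤ ℓ - 1 := by omega

theorem NCrestrict_mul_general (F : Type) [Field F] (n d₁ d₂ a b ℓ : ℕ)
    (f₁ f₂ : NCPoly F n) (h₁ : IsHomog d₁ f₁)
    (ha : 1 ≤ a) :
    (b ≤ d₁ → NCrestrict a b (f₁ * f₂) = coeffSum f₂ • NCrestrict a b f₁) ∧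
    (d₁ + 1 ≤ a →
      NCrestrict a b (f₁ * f₂) = coeffSum f₁ • NCrestrict (a - d₁) (b - d₁) f₂) ∧
    ((Finset.Icc 1 (d₁ + d₂)).filter
        (fun a' => a' + ℓ - 1 ≤ d₁ + d₂ ∧ a' ≤ d₁ ∧ d₁ + 1 ≤ a' + ℓ - 1)).card
      ≤ ℓ - 1 := by
  refine ⟨fun hbd => ?_, fun hda => ?_, card_filter_straddling_le _ _ _⟩
  · rw [NCrestrict_eq_mapDomain, NCrestrict_eq_mapDomain, ← MonoidAlgebra.ofCoeff_smul,
      mapDomain_coeff_mul_of_left fun w₁ hw₁ => wordRestrict_mul_of_le ha hbd (h₁ w₁ hw₁)]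
  · rw [NCrestrict_eq_mapDomain, NCrestrict_eq_mapDomain, ← MonoidAlgebra.ofCoeff_smul,
      mapDomain_coeff_mul_of_right fun w₁ hw₁ => wordRestrict_mul_of_lt hda (h₁ w₁ hw₁)]

/-- If `f = f₁·f₂` with `f₁, f₂` homogeneous of degrees `d₁, d₂`, and
`J = [a,b] ⊆ [d₁+d₂]` is an interval of length `ℓ = b - a + 1`, then:
if `J ⊆ [1,d₁]` then `f^J = f₂^∅ • f₁^J`; if `J ⊆ [d₁+1, d₁+d₂]` then
`f^J = f₁^∅ • f₂^{J-d₁}`; and the number of intervals of length `ℓ` in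
`[d₁+d₂]` containing both `d₁` and `d₁+1` is at most `ℓ - 1`. -/
theorem NCrestrict_mul (F : Type) [Field F] (n d₁ d₂ a b ℓ : ℕ)
    (f₁ f₂ : NCPoly F n) (h₁ : IsHomog d₁ f₁) (h₂ : IsHomog d₂ f₂)
    (ha : 1 ≤ a) (hab : a ≤ b) (hb : b ≤ d₁ + d₂) (hℓ : b + 1 = a + ℓ) :
    (b ≤ d₁ → NCrestrict a b (f₁ * f₂) = coeffSum f₂ • NCrestrict a b f₁) ∧
    (d₁ + 1 ≤ a →
      NCrestrict a b (f₁ * f₂) = coeffSum f₁ • NCrestrict (a - d₁) (b - d₁) f₂) ∧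
    ((Finset.Icc 1 (d₁ + d₂)).filter
        (fun a' => a' + ℓ - 1 ≤ d₁ + d₂ ∧ a' ≤ d₁ ∧ d₁ + 1 ≤ a' + ℓ - 1)).card
      ≤ ℓ - 1 :=
  NCrestrict_mul_general F n d₁ d₂ a b ℓ f₁ f₂ h₁ ha
end

section
/- Chain rule for left partial derivatives: let f ∈ F⟨x_0, x_1,...,x_n⟩, let v ∈ F⟨x_1,...,x_n⟩ be a polynomial with no constant term, and let f|_{x_0:=v} denote substitution of v for x_0. Then for every variable x_k (k ≥ 1), ∂_{x_k}(f|_{x_0:=v}) = (∂_{x_k} f)|_{x_0:=v} + (∂_{x_k} v) · (∂_{x_0} f)|_{x_0:=v}, provided v is homogeneous of degree 1 or 2 in at most two variables (so ∂_{x_k} v is a variable or a constant). -/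
/-- The variable `x_i` as a non-commutative polynomial. -/
noncomputable def NCvar {F : Type} [CommSemiring F] {n : ℕ} (i : Fin n) : NCPoly F n :=
  MonoidAlgebra.of F (FreeMonoid (Fin n)) (FreeMonoid.of i)

/-- The left partial derivative `∂_x f`: `f = x·(∂_x f) + f₁` with no monomial
of `f₁` starting with `x`. -/
noncomputable def leftDeriv {F : Type} [CommSemiring F] {n : ℕ} (x : Fin n)
    (f : NCPoly F n) : NCPoly F n :=
  Finsupp.sum f.coeff (fun w c =>
    if (FreeMonoid.toList w).head? = some x then
      MonoidAlgebra.single (FreeMonoid.ofList (FreeMonoid.toList w).tail) c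
    else 0)

/-- Substitution `x_0 := v`: the algebra homomorphism fixing `x_1, …, x_n`
and sending `x_0` to `v`. -/
noncomputable def substX0 {F : Type} [CommSemiring F] {n : ℕ} (v : NCPoly F (n + 1)) :
    NCPoly F (n + 1) →ₐ[F] NCPoly F (n + 1) :=
  MonoidAlgebra.lift F (NCPoly F (n + 1)) (FreeMonoid (Fin (n + 1)))
    (FreeMonoid.lift (fun i => if i = 0 then v else NCvar i))

/-! A substitution `x_i ↦ φ_i` in which no `φ_i` has a constant term satisfies the general chain
rule `∂_k (f ∘ φ) = Σ_i ∂_k φ_i · (∂_i f) ∘ φ`: both sides are linear in `f`, and on a monomial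
`x_j w` the product rule `∂(a b) = ∂a · b + a.coeff 1 • ∂b` loses its second term because `φ_j`
has no constant term.
For `φ = (v, x_1, …, x_n)` and `k ≠ 0` only the summands `i = k` and `i = 0` survive. -/

open MonoidAlgebra

section LeftDeriv
variable {F : Type} [CommSemiring F] {n : ℕ}

lemma leftDeriv_single (x : Fin n) (w : FreeMonoid (Fin n)) (c : F) :
    leftDeriv x (single w c) =
      if (FreeMonoid.toList w).head? = some x then
        single (FreeMonoid.ofList (FreeMonoid.toList w).tail) c
      else 0 := by
  unfold leftDeriv
  rw [coeff_single, Finsupp.sum_single_index]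
  split <;> simp

lemma leftDeriv_single_one (x : Fin n) (c : F) : leftDeriv x (single 1 c : NCPoly F n) = 0 := by
  simp [leftDeriv_single]

lemma leftDeriv_single_of_mul (x i : Fin n) (w : FreeMonoid (Fin n)) (c : F) :
    leftDeriv x (single (FreeMonoid.of i * w) c) = if i = x then single w c else 0 := by
  simp [leftDeriv_single, FreeMonoid.toList_mul]

lemma leftDeriv_zero (x : Fin n) : leftDeriv x (0 : NCPoly F n) = 0 := by
  simp [leftDeriv]

lemma leftDeriv_add (x : Fin n) (f g : NCPoly F n) :
    leftDeriv x (f + g) = leftDeriv x f + leftDeriv x g := by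
  unfold leftDeriv
  rw [coeff_add]
  apply Finsupp.sum_add_index' <;> intros <;> split <;> simp [single_add]

lemma leftDeriv_smul (x : Fin n) (c : F) (f : NCPoly F n) :
    leftDeriv x (c • f) = c • leftDeriv x f := by
  unfold leftDeriv
  rw [coeff_smul, Finsupp.sum_smul_index (by intro w; split <;> simp), Finsupp.smul_sum]
  refine Finsupp.sum_congr fun w _ => ?_
  split <;> simp [smul_single]

lemma leftDeriv_mul (x : Fin n) (a b : NCPoly F n) :
    leftDeriv x (a * b) = leftDeriv x a * b + a.coeff 1 • leftDeriv x b := by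
  induction a using induction_linear with
  | zero => simp [leftDeriv_zero]
  | add a a' ha ha' =>
    rw [add_mul, leftDeriv_add, ha, ha', leftDeriv_add, add_mul, coeff_add, Finsupp.add_apply,
      add_smul]
    abel
  | single u c =>
    induction b using induction_linear with
    | zero => simp [leftDeriv_zero]
    | add b b' hb hb' =>
      rw [mul_add, leftDeriv_add, hb, hb', leftDeriv_add, mul_add, smul_add]
      abel
    | single w d =>
      cases u with
      | one =>
        rw [single_mul_single, one_mul, ← smul_eq_mul, ← smul_single, leftDeriv_smul,
          leftDeriv_single_one, zero_mul, zero_add, coeff_single, Finsupp.single_eq_same]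
      | of_mul i u =>
        have hu : (FreeMonoid.of i * u : FreeMonoid (Fin n)) ≠ 1 := by simp
        rw [single_mul_single, mul_assoc, leftDeriv_single_of_mul, leftDeriv_single_of_mul,
          coeff_single, Finsupp.single_eq_of_ne hu.symm, zero_smul, add_zero]
        split_ifs <;> simp [single_mul_single]

lemma leftDeriv_NCvar (x i : Fin n) :
    leftDeriv x (NCvar i : NCPoly F n) = if i = x then 1 else 0 := by
  simp [NCvar, of_apply, leftDeriv_single, one_def]

lemma coeff_NCvar_one (i : Fin n) : (NCvar i : NCPoly F n).coeff 1 = 0 := by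
  simp [NCvar, of_apply]

end LeftDeriv

section Subst
variable {F : Type} [CommSemiring F] {m n : ℕ}

noncomputable def substVars (φ : Fin n → NCPoly F m) : NCPoly F n →ₐ[F] NCPoly F m :=
  lift F (NCPoly F m) (FreeMonoid (Fin n)) (FreeMonoid.lift φ)

lemma substVars_single (φ : Fin n → NCPoly F m) (w : FreeMonoid (Fin n)) (c : F) :
    substVars φ (single w c) = c • FreeMonoid.lift φ w := by
  simp [substVars, lift_single]

lemma leftDeriv_substVars (φ : Fin n → NCPoly F m) (hφ : ∀ i, (φ i).coeff 1 = 0) (k : Fin m)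
    (f : NCPoly F n) :
    leftDeriv k (substVars φ f) = ∑ i, leftDeriv k (φ i) * substVars φ (leftDeriv i f) := by
  induction f using MonoidAlgebra.induction_on with
  | of w =>
    cases w with
    | one => simp [of_apply, leftDeriv_single_one, substVars_single, one_def]
    | of_mul j w =>
      rw [of_apply, substVars_single, one_smul, map_mul, FreeMonoid.lift_eval_of, leftDeriv_mul,
        hφ, zero_smul, add_zero]
      simp [leftDeriv_single_of_mul, apply_ite, substVars_single]
  | add f g hf hg =>
    simp only [map_add, leftDeriv_add, hf, hg, mul_add, Finset.sum_add_distrib]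
  | smul c f hf =>
    simp only [map_smul, leftDeriv_smul, hf, mul_smul_comm, Finset.smul_sum]
end Subst

theorem leftDeriv_chain_rule_general (F : Type) [Field F] (n : ℕ)
    (f v : NCPoly F (n + 1))
    (hvconst : ∀ w ∈ v.coeff.support, FreeMonoid.toList w ≠ [])
    (k : Fin (n + 1)) (hk : k ≠ 0) :
    leftDeriv k (substX0 v f)
      = substX0 v (leftDeriv k f) + leftDeriv k v * substX0 v (leftDeriv 0 f) := by
  have hv : v.coeff 1 = 0 := by
    by_contra h
    exact hvconst 1 (Finsupp.mem_support_iff.mpr h) rfl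
  set φ : Fin (n + 1) → NCPoly F (n + 1) := fun i => if i = 0 then v else NCvar i
  have hφ : ∀ i, (φ i).coeff 1 = 0 := fun i => by
    by_cases hi : i = 0 <;> simp [φ, hi, hv, coeff_NCvar_one]
  change leftDeriv k (substVars φ f) = substVars φ _ + _ * substVars φ _
  rw [leftDeriv_substVars φ hφ, Fintype.sum_eq_add k 0 hk]
  · simp [φ, hk, leftDeriv_NCvar]
  · rintro i ⟨hik, hi0⟩
    simp [φ, hi0, hik, leftDeriv_NCvar]

/-- Chain rule for left partial derivatives: if `v ∈ F⟨x_1,…,x_n⟩` has no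
constant term and is homogeneous of degree 1 or 2 in at most two variables,
then for every `k ≥ 1`,
`∂_{x_k}(f|_{x_0:=v}) = (∂_{x_k}f)|_{x_0:=v} + (∂_{x_k}v)·(∂_{x_0}f)|_{x_0:=v}`. -/
theorem leftDeriv_chain_rule (F : Type) [Field F] (n : ℕ)
    (f v : NCPoly F (n + 1))
    (hv0 : ∀ w ∈ v.coeff.support, (0 : Fin (n + 1)) ∉ FreeMonoid.toList w)
    (hvconst : ∀ w ∈ v.coeff.support, FreeMonoid.toList w ≠ [])
    (hvhom : (∀ w ∈ v.coeff.support, (FreeMonoid.toList w).length = 1) ∨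
             (∀ w ∈ v.coeff.support, (FreeMonoid.toList w).length = 2))
    (hvvars : ∃ y z : Fin (n + 1), ∀ w ∈ v.coeff.support,
      ∀ i ∈ FreeMonoid.toList w, i = y ∨ i = z)
    (k : Fin (n + 1)) (hk : k ≠ 0) :
    leftDeriv k (substX0 v f)
      = substX0 v (leftDeriv k f) + leftDeriv k v * substX0 v (leftDeriv 0 f) :=
  leftDeriv_chain_rule_general F n f v hvconst k hk
end
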